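/- arXiv:1903.04471 — 2 statements merged into one kernel-verified Lean document; each statement's English description precedes it below -/
import Mathlib

section
/- For every ε > 0 there exist δ = δ(ε) > 0 and C = C(ε) > 0 such that the following holds for every m ∈ ℕ. Let X be a set of size m and let ℱ ⊆ 2^X be a family of subsets of X with |F| ≥ ε·m for every F ∈ ℱ. Then there is a subfamily 𝒢 ⊆ ℱ with |𝒢| ≤ C and a partition 𝒫 of ℱ ∖ 𝒢 into sets of size 4 such that |B₁ ∩ B₂ ∩ B₃ ∩ B₄| ≥ δ·m for every {B₁, B₂, B₃, B₄} ∈ 𝒫. -/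
open Finset

set_option maxHeartbeats 1600000 in
lemma key10 {X : Type} [Fintype X] [DecidableEq X] {ε : ℝ} (hε : 0 < ε)
    (F : Finset (Finset X))
    (hF : ∀ A ∈ F, ε * (Fintype.card X : ℝ) ≤ (A.card : ℝ))
    (h4 : 4 ≤ F.card) (hC : 12 / ε ^ 4 + 4 ≤ (F.card : ℝ)) :
    ∃ A1 ∈ F, ∃ A2 ∈ F, ∃ A3 ∈ F, ∃ A4 ∈ F,
      A1 ≠ A2 ∧ A1 ≠ A3 ∧ A1 ≠ A4 ∧ A2 ≠ A3 ∧ A2 ≠ A4 ∧ A3 ≠ A4 ∧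
      ε ^ 4 / 2 * (Fintype.card X : ℝ) ≤ ((A1 ∩ (A2 ∩ (A3 ∩ A4))).card : ℝ) := by
  classical
  set m : ℝ := (Fintype.card X : ℝ) with hm
  have hm1 : (1 : ℝ) ≤ m := by
    have : 1 ≤ Fintype.card X := by
      by_contra hc
      push_neg at hc
      interval_cases h : Fintype.card X
      · have hsub : F ⊆ {∅} := by
          intro A hA
          have : A.card = 0 := by
            have := Finset.card_le_univ A
            simp [Finset.card_univ, h] at this
            simp [this]
          simp [Finset.card_eq_zero.mp this]
        have := Finset.card_le_card hsub
        simp at this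
        omega
    rw [hm]; exact_mod_cast this
  have hm0 : (0 : ℝ) ≤ m := by linarith
  by_contra hcon
  push_neg at hcon
  set r : ℝ := (F.card : ℝ) with hr
  have hr4 : (4 : ℝ) ≤ r := by rw [hr]; exact_mod_cast h4
  -- the degree function
  set d : X → ℝ := fun x => ∑ A ∈ F, (if x ∈ A then (1:ℝ) else 0) with hd
  have hdnn : ∀ x, 0 ≤ d x := by
    intro x
    apply Finset.sum_nonneg
    intro A _
    split <;> norm_num
  -- sum of indicator over univ equals card
  have hind : ∀ A : Finset X, ∑ x : X, (if x ∈ A then (1:ℝ) else 0) = (A.card : ℝ) := by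
    intro A
    rw [Finset.sum_ite_mem, Finset.univ_inter, Finset.sum_const, nsmul_eq_mul, mul_one]
  -- Piece 1
  have hsum1 : ε * m * r ≤ ∑ x : X, d x := by
    rw [hd, Finset.sum_comm]
    simp only [hind]
    calc ε * m * r = ∑ _A ∈ F, ε * m := by rw [Finset.sum_const, nsmul_eq_mul]; ring
    _ ≤ ∑ A ∈ F, (A.card : ℝ) := Finset.sum_le_sum fun A hA => hF A hA
  -- Piece 2 : expand the 4th power
  have hdpow : ∀ x : X, d x ^ 4 =
      ∑ A1 ∈ F, ∑ A2 ∈ F, ∑ A3 ∈ F, ∑ A4 ∈ F,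
        (if x ∈ A1 ∩ (A2 ∩ (A3 ∩ A4)) then (1:ℝ) else 0) := by
    intro x
    have h1 : d x ^ 4 = d x * (d x * (d x * d x)) := by ring
    rw [h1, hd]
    simp only [Finset.sum_mul, Finset.mul_sum]
    refine Finset.sum_congr rfl fun A1 _ => ?_
    refine Finset.sum_congr rfl fun A2 _ => ?_
    refine Finset.sum_congr rfl fun A3 _ => ?_
    refine Finset.sum_congr rfl fun A4 _ => ?_
    by_cases h1 : x ∈ A1 <;> by_cases h2 : x ∈ A2 <;> by_cases h3 : x ∈ A3 <;>
      by_cases h4 : x ∈ A4 <;> simp [h1, h2, h3, h4]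
  -- Piece 3 : fourth moment equals sum of intersections
  have hmoment : ∑ x : X, d x ^ 4 =
      ∑ A1 ∈ F, ∑ A2 ∈ F, ∑ A3 ∈ F, ∑ A4 ∈ F,
        (((A1 ∩ (A2 ∩ (A3 ∩ A4))).card : ℝ)) := by
    simp only [hdpow]
    rw [Finset.sum_comm]
    refine Finset.sum_congr rfl fun A1 _ => ?_
    rw [Finset.sum_comm]
    refine Finset.sum_congr rfl fun A2 _ => ?_
    rw [Finset.sum_comm]
    refine Finset.sum_congr rfl fun A3 _ => ?_
    rw [Finset.sum_comm]
    refine Finset.sum_congr rfl fun A4 _ => ?_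
    exact hind _
  -- Piece 4 : power mean
  have hpm : (∑ x : X, d x) ^ 4 / m ^ 3 ≤ ∑ x : X, d x ^ 4 := by
    have := pow_sum_div_card_le_sum_pow (s := (Finset.univ : Finset X))
      (f := d) (fun i _ => hdnn i) 3
    simpa [Finset.card_univ, hm] using this
  -- Piece 5 : pointwise upper bound coming from the contradiction hypothesis
  have hub : ∀ s : Finset X, (s.card : ℝ) ≤ m := by
    intro s
    rw [hm]
    exact_mod_cast Finset.card_le_univ s
  have key_pt : ∀ A1 ∈ F, ∀ A2 ∈ F, ∀ A3 ∈ F, ∀ A4 ∈ F,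
      ((A1 ∩ (A2 ∩ (A3 ∩ A4))).card : ℝ) ≤ ε ^ 4 / 2 * m +
        m * ((if A1 = A2 then (1:ℝ) else 0) + (if A1 = A3 then (1:ℝ) else 0) +
             (if A1 = A4 then (1:ℝ) else 0) + (if A2 = A3 then (1:ℝ) else 0) +
             (if A2 = A4 then (1:ℝ) else 0) + (if A3 = A4 then (1:ℝ) else 0)) := by
    intro A1 h1 A2 h2 A3 h3 A4 h4
    have hδ : (0:ℝ) ≤ ε ^ 4 / 2 * m := by positivity
    have i1 : (0:ℝ) ≤ if A1 = A2 then (1:ℝ) else 0 := by split <;> norm_num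
    have i2 : (0:ℝ) ≤ if A1 = A3 then (1:ℝ) else 0 := by split <;> norm_num
    have i3 : (0:ℝ) ≤ if A1 = A4 then (1:ℝ) else 0 := by split <;> norm_num
    have i4 : (0:ℝ) ≤ if A2 = A3 then (1:ℝ) else 0 := by split <;> norm_num
    have i5 : (0:ℝ) ≤ if A2 = A4 then (1:ℝ) else 0 := by split <;> norm_num
    have i6 : (0:ℝ) ≤ if A3 = A4 then (1:ℝ) else 0 := by split <;> norm_num
    have hu := hub (A1 ∩ (A2 ∩ (A3 ∩ A4)))
    by_cases e1 : A1 = A2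
    · rw [if_pos e1]; nlinarith
    by_cases e2 : A1 = A3
    · rw [if_pos e2]; nlinarith
    by_cases e3 : A1 = A4
    · rw [if_pos e3]; nlinarith
    by_cases e4 : A2 = A3
    · rw [if_pos e4]; nlinarith
    by_cases e5 : A2 = A4
    · rw [if_pos e5]; nlinarith
    by_cases e6 : A3 = A4
    · rw [if_pos e6]; nlinarith
    have := hcon A1 h1 A2 h2 A3 h3 A4 h4 e1 e2 e3 e4 e5 e6
    rw [if_neg e1, if_neg e2, if_neg e3, if_neg e4, if_neg e5, if_neg e6]
    linarith
  -- Piece 6 : summing the pointwise bound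
  have hup : ∑ A1 ∈ F, ∑ A2 ∈ F, ∑ A3 ∈ F, ∑ A4 ∈ F,
      (((A1 ∩ (A2 ∩ (A3 ∩ A4))).card : ℝ)) ≤
      r ^ 4 * (ε ^ 4 / 2 * m) + 6 * r ^ 3 * m := by
    have step : ∑ A1 ∈ F, ∑ A2 ∈ F, ∑ A3 ∈ F, ∑ A4 ∈ F,
        (((A1 ∩ (A2 ∩ (A3 ∩ A4))).card : ℝ)) ≤
        ∑ A1 ∈ F, ∑ A2 ∈ F, ∑ A3 ∈ F, ∑ A4 ∈ F,
          (ε ^ 4 / 2 * m +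
          m * ((if A1 = A2 then (1:ℝ) else 0) + (if A1 = A3 then (1:ℝ) else 0) +
               (if A1 = A4 then (1:ℝ) else 0) + (if A2 = A3 then (1:ℝ) else 0) +
               (if A2 = A4 then (1:ℝ) else 0) + (if A3 = A4 then (1:ℝ) else 0))) :=
      Finset.sum_le_sum fun A1 h1 => Finset.sum_le_sum fun A2 h2 =>
        Finset.sum_le_sum fun A3 h3 => Finset.sum_le_sum fun A4 h4 =>
          key_pt A1 h1 A2 h2 A3 h3 A4 h4
    refine step.trans ?_
    have hval : ∑ A1 ∈ F, ∑ A2 ∈ F, ∑ A3 ∈ F, ∑ A4 ∈ F,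
        (ε ^ 4 / 2 * m +
        m * ((if A1 = A2 then (1:ℝ) else 0) + (if A1 = A3 then (1:ℝ) else 0) +
             (if A1 = A4 then (1:ℝ) else 0) + (if A2 = A3 then (1:ℝ) else 0) +
             (if A2 = A4 then (1:ℝ) else 0) + (if A3 = A4 then (1:ℝ) else 0))) =
        r ^ 4 * (ε ^ 4 / 2 * m) + 6 * r ^ 3 * m := by
      simp only [mul_add, Finset.sum_add_distrib, mul_ite, mul_one, mul_zero,
        Finset.sum_const, nsmul_eq_mul, Finset.sum_ite_eq, Finset.sum_ite_mem,
        Finset.inter_self]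
      rw [hr]; ring
    exact le_of_eq hval
  -- Put everything together
  have hmain : ε ^ 4 * m * r ^ 4 ≤ r ^ 4 * (ε ^ 4 / 2 * m) + 6 * r ^ 3 * m := by
    have hmr : (0:ℝ) ≤ ε * m * r := by positivity
    have h1 : ε ^ 4 * m * r ^ 4 = (ε * m * r) ^ 4 / m ^ 3 := by
      field_simp
    have h2 : (ε * m * r) ^ 4 / m ^ 3 ≤ (∑ x : X, d x) ^ 4 / m ^ 3 := by
      gcongr
    rw [h1]
    calc (ε * m * r) ^ 4 / m ^ 3 ≤ (∑ x : X, d x) ^ 4 / m ^ 3 := h2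
      _ ≤ ∑ x : X, d x ^ 4 := hpm
      _ = _ := hmoment
      _ ≤ _ := hup
  -- derive the contradiction
  have hru : ε ^ 4 / 2 * m * r ^ 4 ≤ 6 * r ^ 3 * m := by nlinarith
  have hrpos : (0:ℝ) < r := by linarith
  have hpos : (0:ℝ) < r ^ 3 * m := mul_pos (pow_pos hrpos 3) (by linarith)
  have h6 : ε ^ 4 / 2 * r ≤ 6 := by
    have hmm : (ε ^ 4 / 2 * r) * (r ^ 3 * m) ≤ 6 * (r ^ 3 * m) := by nlinarith
    exact le_of_mul_le_mul_right hmm hpos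
  have h12 : ε ^ 4 * r ≤ 12 := by linarith
  have hge : ε ^ 4 * (12 / ε ^ 4 + 4) ≤ ε ^ 4 * r := by
    apply mul_le_mul_of_nonneg_left _ (by positivity)
    rw [hr] at hC ⊢
    exact hC
  have heq : ε ^ 4 * (12 / ε ^ 4 + 4) = 12 + 4 * ε ^ 4 := by
    field_simp
  nlinarith [pow_pos hε 4]

lemma greedy10 {X : Type} [Fintype X] [DecidableEq X] {ε : ℝ} (hε : 0 < ε) :
    ∀ n : ℕ, ∀ F : Finset (Finset X), F.card ≤ n →
    (∀ A ∈ F, ε * (Fintype.card X : ℝ) ≤ (A.card : ℝ)) →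
    ∃ G ⊆ F, (G.card : ℝ) ≤ 12 / ε ^ 4 + 4 ∧
      ∃ P : Finset (Finset (Finset X)),
        (↑P : Set (Finset (Finset X))).PairwiseDisjoint id ∧
        P.sup id = F \ G ∧
        ∀ Q ∈ P, Q.card = 4 ∧ ε ^ 4 / 2 * (Fintype.card X : ℝ) ≤ ((Q.inf id).card : ℝ) := by
  intro n
  induction n with
  | zero =>
    intro F hcard hF
    refine ⟨F, subset_rfl, ?_, ∅, by simp, by simp, by simp⟩
    have : F.card = 0 := Nat.le_zero.mp hcard
    rw [this]
    have : (0:ℝ) ≤ 12 / ε ^ 4 := by positivity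
    norm_num
    linarith
  | succ n ih =>
    intro F hcard hF
    by_cases hbig : 12 / ε ^ 4 + 4 ≤ (F.card : ℝ)
    · have h4 : 4 ≤ F.card := by
        have h0 : (0:ℝ) ≤ 12 / ε ^ 4 := by positivity
        have : (4:ℝ) ≤ (F.card : ℝ) := by linarith
        exact_mod_cast this
      obtain ⟨A1, h1, A2, h2, A3, h3, A4, h4', e12, e13, e14, e23, e24, e34, hbigint⟩ :=
        key10 hε F hF h4 hbig
      set Q : Finset (Finset X) := {A1, A2, A3, A4} with hQ
      have hQF : Q ⊆ F := by
        intro x hx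
        simp only [hQ, Finset.mem_insert, Finset.mem_singleton] at hx
        rcases hx with rfl | rfl | rfl | rfl
        exacts [h1, h2, h3, h4']
      have hQcard : Q.card = 4 := by
        rw [hQ]
        rw [Finset.card_insert_of_notMem (by simp [e12, e13, e14]),
          Finset.card_insert_of_notMem (by simp [e23, e24]),
          Finset.card_insert_of_notMem (by simp [e34]), Finset.card_singleton]
      set F' : Finset (Finset X) := F \ Q with hF'
      have hF'card : F'.card ≤ n := by
        rw [hF', Finset.card_sdiff_of_subset hQF, hQcard]
        omega
      obtain ⟨G, hGF', hGcard, P, hPdisj, hPsup, hPmem⟩ :=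
        ih F' hF'card (fun A hA => hF A (Finset.mem_sdiff.mp hA).1)
      have hQG : ∀ x ∈ Q, x ∉ G := fun x hx hG => (Finset.mem_sdiff.mp (hGF' hG)).2 hx
      refine ⟨G, hGF'.trans Finset.sdiff_subset, hGcard, insert Q P, ?_, ?_, ?_⟩
      · rw [Finset.coe_insert]
        refine hPdisj.insert fun b hb _ => ?_
        have hbsub : b ⊆ F' \ G := by
          rw [← hPsup]
          exact Finset.le_sup (f := id) hb
        have hbF : b ⊆ F \ Q := by
          rw [← hF']
          exact hbsub.trans Finset.sdiff_subset
        exact Finset.sdiff_disjoint.symm.mono_right hbF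
      · rw [Finset.sup_insert, hPsup]
        ext x
        simp only [hF', Finset.sup_eq_union, Finset.mem_union, Finset.mem_sdiff, id_eq]
        constructor
        · rintro (hx | ⟨⟨hxF, _⟩, hxG⟩)
          · exact ⟨hQF hx, hQG x hx⟩
          · exact ⟨hxF, hxG⟩
        · rintro ⟨hxF, hxG⟩
          by_cases hxQ : x ∈ Q
          · exact Or.inl hxQ
          · exact Or.inr ⟨⟨hxF, hxQ⟩, hxG⟩
      · intro Q' hQ'
        rcases Finset.mem_insert.mp hQ' with h | hQ'P
        · rw [h]
          refine ⟨hQcard, ?_⟩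
          have hinf : Q.inf id = A1 ∩ (A2 ∩ (A3 ∩ A4)) := by
            rw [hQ]
            simp [Finset.inf_insert, Finset.inf_eq_inter]
          rw [hinf]
          exact hbigint
        · exact hPmem Q' hQ'P
    · exact ⟨F, subset_rfl, le_of_not_ge hbig, ∅, by simp, by simp, by simp⟩


/-- For every ε > 0 there exist δ = δ(ε) > 0 and C = C(ε) > 0 such that the following
holds for every finite set X of size m.  Let ℱ be a family of subsets of X with
|F| ≥ ε·m for every F ∈ ℱ.  Then there is a subfamily 𝒢 ⊆ ℱ with |𝒢| ≤ C and a
partition 𝒫 of ℱ ∖ 𝒢 into sets of size 4 such that the four members of each part of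
𝒫 have a common intersection of size at least δ·m. -/
theorem stmt10 (ε : ℝ) (hε : 0 < ε) :
    ∃ δ C : ℝ, 0 < δ ∧ 0 < C ∧
      ∀ (X : Type) [Fintype X] [DecidableEq X],
      ∀ F : Finset (Finset X),
      (∀ A ∈ F, ε * (Fintype.card X : ℝ) ≤ (A.card : ℝ)) →
      ∃ G ⊆ F, (G.card : ℝ) ≤ C ∧
        ∃ P : Finset (Finset (Finset X)),
          (↑P : Set (Finset (Finset X))).PairwiseDisjoint id ∧
          P.sup id = F \ G ∧
          ∀ Q ∈ P, Q.card = 4 ∧ δ * (Fintype.card X : ℝ) ≤ ((Q.inf id).card : ℝ) := by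
  refine ⟨ε ^ 4 / 2, 12 / ε ^ 4 + 4, by positivity, by positivity, ?_⟩
  intro X _ _ F hF
  exact greedy10 hε F.card F le_rfl hF
end

section
/- Let H be a k-partite k-uniform hypergraph with parts B₁, …, B_k. Let v₁, …, v_t be distinct vertices of B_k and let 𝒞 be a tight cycle in the complete (k−1)-partite (k−1)-graph on B₁, …, B_{k−1} with vertex sequence (u_{1,1}, …, u_{1,k−1}, u_{2,1}, …, u_{t,1}, …, u_{t,k−1}). For s ∈ [t] and i ∈ [k−1], let e_{s,i} denote the edge of 𝒞 starting at u_{s,i} (i.e. the k−1 consecutive vertices of 𝒞 beginning with u_{s,i}). Suppose that (i) e_{s,i} ∈ Lk(v_s; B₁, …, B_{k−1}) for every s ∈ [t] and every i ∈ [k−1], and (ii) e_{s,1} ∈ Lk(v_{s−1}; B₁, …, B_{k−1}) for every s ∈ [t], where v₀ := v_t. Then (u_{1,1}, …, u_{1,k−1}, v₁, u_{2,1}, …, u_{2,k−1}, v₂, …, u_{t,1}, …, u_{t,k−1}, v_t) is the vertex sequence of a tight cycle in H. -/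
/-- The set of `len` cyclically consecutive values `f (a % n), f ((a+1) % n), …` of a
function `f : ℕ → V` regarded as a cyclic sequence of length `n`, starting at `a`. -/
def cwin {V : Type} [DecidableEq V] (f : ℕ → V) (n a len : ℕ) : Finset V :=
  ((List.range len).map (fun s => f ((a + s) % n))).toFinset

lemma mem_cwin {V : Type} [DecidableEq V] (f : ℕ → V) (n a len : ℕ) (x : V) :
    x ∈ cwin f n a len ↔ ∃ s < len, f ((a + s) % n) = x := by
  simp [cwin]

lemma cwin_congr {V : Type} [DecidableEq V] (f : ℕ → V) (n a b len : ℕ)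
    (h : a % n = b % n) : cwin f n a len = cwin f n b len := by
  have h' : ∀ s : ℕ, (a + s) % n = (b + s) % n := fun s => by
    rw [← Nat.mod_add_mod, h, Nat.mod_add_mod]
  simp only [cwin, h']

lemma dm_div (k q c : ℕ) (hk : 0 < k) (hc : c < k) : (q * k + c) / k = q := by
  rw [Nat.add_comm, Nat.add_mul_div_right _ _ hk, Nat.div_eq_of_lt hc, Nat.zero_add]

lemma dm_mod (k q c : ℕ) (hc : c < k) : (q * k + c) % k = c := by
  rw [Nat.add_comm, Nat.add_mul_mod_self_right, Nat.mod_eq_of_lt hc]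

lemma ltbig {k t q c : ℕ} (hq : q < t) (hc : c < k) : q * k + c < t * k := by
  calc q * k + c < (q + 1) * k := by
        have : (q + 1) * k = q * k + k := by ring
        omega
  _ ≤ t * k := Nat.mul_le_mul_right _ (by omega)

lemma dmuniq (m x y r s : ℕ) (hm : 0 < m) (hr : r < m) (hs : s < m)
    (h : x * m + r = y * m + s) : x = y ∧ r = s := by
  have h1 : (x * m + r) % m = r := dm_mod m x r hr
  have h2 : (y * m + s) % m = s := dm_mod m y s hs
  have hrs : r = s := by rw [← h1, h, h2]
  have hxy : x * m = y * m := by omega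
  exact ⟨Nat.eq_of_mul_eq_mul_right hm hxy, hrs⟩

lemma wval {V : Type} (k t : ℕ) (u v : ℕ → V) (hk : 2 ≤ k) (ht : 1 ≤ t)
    (q r j : ℕ) (hq : q < t) (hr : r < k) (hj : j < k) :
    (if (q * k + r + j) % (t * k) % k = k - 1 then v ((q * k + r + j) % (t * k) / k)
      else u ((q * k + r + j) % (t * k) / k * (k - 1) + (q * k + r + j) % (t * k) % k)) =
    if r + j = k - 1 then v q
    else if r + j < k - 1 then u ((q * (k - 1) + (r + j)) % (t * (k - 1)))
    else u ((q * (k - 1) + (r + j) - 1) % (t * (k - 1))) := by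
  have hk0 : 0 < k := by omega
  by_cases h1 : r + j = k - 1
  · have e : q * k + r + j = q * k + (k - 1) := by omega
    rw [e, Nat.mod_eq_of_lt (ltbig hq (by omega)), dm_mod k q (k - 1) (by omega),
        dm_div k q (k - 1) hk0 (by omega), if_pos rfl, if_pos h1]
  by_cases h2 : r + j < k - 1
  · have e : q * k + r + j = q * k + (r + j) := by omega
    rw [e, Nat.mod_eq_of_lt (ltbig hq (by omega)), dm_mod k q (r + j) (by omega),
        dm_div k q (r + j) hk0 (by omega), if_neg h1, if_neg h1, if_pos h2,
        Nat.mod_eq_of_lt (ltbig (k := k - 1) hq (by omega))]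
  · -- here k ≤ r + j ≤ 2k - 2
    have h3 : k ≤ r + j := by omega
    have e : q * k + r + j = (q + 1) * k + (r + j - k) := by
      have : (q + 1) * k = q * k + k := by ring
      omega
    rcases Nat.lt_or_ge (q + 1) t with hq1 | hq1
    · rw [e, Nat.mod_eq_of_lt (ltbig hq1 (by omega)), dm_mod k (q + 1) (r + j - k) (by omega),
          dm_div k (q + 1) (r + j - k) hk0 (by omega), if_neg (by omega), if_neg h1,
          if_neg h2]
      congr 1
      have e2 : (q + 1) * (k - 1) = q * (k - 1) + (k - 1) := Nat.succ_mul q (k - 1)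
      have hlt : q * (k - 1) + (r + j) - 1 < t * (k - 1) := by
        have := ltbig (k := k - 1) (t := t) (q := q + 1) (c := r + j - k) hq1 (by omega)
        omega
      rw [Nat.mod_eq_of_lt hlt]
      omega
    · have hq1' : q + 1 = t := by omega
      have e4 : (q + 1) * k = t * k := by rw [hq1']
      have hktk : k ≤ t * k := Nat.le_mul_of_pos_left _ ht
      rw [e, e4, Nat.add_comm (t * k), Nat.add_mod_right,
          Nat.mod_eq_of_lt (show r + j - k < t * k by omega),
          Nat.mod_eq_of_lt (show r + j - k < k by omega),
          Nat.div_eq_of_lt (show r + j - k < k by omega), if_neg (by omega),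
          if_neg h1, if_neg h2]
      congr 1
      have e5 : t * (k - 1) = q * (k - 1) + (k - 1) := by rw [← hq1']; exact Nat.succ_mul q (k - 1)
      have e6 : q * (k - 1) + (r + j) - 1 = t * (k - 1) + (r + j - k) := by omega
      have hkle : k - 1 ≤ t * (k - 1) := Nat.le_mul_of_pos_left _ ht
      have e7 : (q * (k - 1) + (r + j) - 1) % (t * (k - 1)) = r + j - k := by
        rw [e6, Nat.add_comm (t * (k - 1)), Nat.add_mod_right,
            Nat.mod_eq_of_lt (show r + j - k < t * (k - 1) by omega)]
      rw [e7]
      omega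

/-- Lifting a tight cycle (Observation 2.13).  Let `H` be a k-partite k-graph with
parts `B 1, …, B k` (edge set `E`).  Let `v 0, …, v (t-1)` be distinct vertices of
`B k` and let 𝒞 be a tight cycle in the complete (k−1)-partite (k−1)-graph on
`B 1, …, B (k-1)` with (cyclic) vertex sequence `u 0, …, u (t(k-1) - 1)`, where the
edge `e (s,i)` of 𝒞 starting at `u (s*(k-1)+i)` is the cyclic window of length k−1 at
position `s*(k-1)+i`.  Suppose that (i) `e (s,i) ∈ Lk(v s)` for all `s < t`, `i < k-1`
and (ii) `e (s,0) ∈ Lk(v (s-1))` (indices of `v` cyclic) for all `s < t`.  Then the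
interleaved sequence `u (s*(k-1)), …, u (s*(k-1)+k-2), v s` (s = 0, …, t−1) is the
vertex sequence of a tight cycle in `H`. -/
theorem stmt12 (V : Type) [DecidableEq V] (k t : ℕ) (hk : 2 ≤ k) (ht : 1 ≤ t)
    (E : Finset (Finset V)) (B : ℕ → Finset V)
    -- `H` is k-partite with parts `B 1, …, B k`
    (hdisj : ∀ i ∈ Finset.Icc 1 k, ∀ j ∈ Finset.Icc 1 k, i ≠ j → Disjoint (B i) (B j))
    (hpart : ∀ e ∈ E, ∀ i ∈ Finset.Icc 1 k, (e ∩ B i).card = 1)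
    (u v : ℕ → V)
    -- `v 0, …, v (t-1)` are distinct vertices of `B k`
    (hvB : ∀ s < t, v s ∈ B k)
    (hvinj : ∀ a < t, ∀ b < t, v a = v b → a = b)
    -- the `u`'s are distinct, disjoint from the `v`'s, and form a tight cycle in the
    -- complete (k−1)-partite (k−1)-graph on `B 1, …, B (k-1)`
    (huinj : ∀ a < t * (k - 1), ∀ b < t * (k - 1), u a = u b → a = b)
    (huv : ∀ a < t * (k - 1), ∀ b < t, u a ≠ v b)
    (hwin : ∀ a < t * (k - 1), ∀ i ∈ Finset.Icc 1 (k - 1),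
      ((cwin u (t * (k - 1)) a (k - 1)) ∩ B i).card = 1)
    -- condition (i)
    (hcondi : ∀ s < t, ∀ i < k - 1,
      insert (v s) (cwin u (t * (k - 1)) (s * (k - 1) + i) (k - 1)) ∈ E)
    -- condition (ii)
    (hcondii : ∀ s < t,
      insert (v ((s + t - 1) % t)) (cwin u (t * (k - 1)) (s * (k - 1)) (k - 1)) ∈ E) :
    (∀ a < t * k,
      cwin (fun j => if j % k = k - 1 then v (j / k) else u ((j / k) * (k - 1) + j % k))
        (t * k) a k ∈ E) ∧
    (∀ a < t * k, ∀ b < t * k,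
      (fun j => if j % k = k - 1 then v (j / k) else u ((j / k) * (k - 1) + j % k)) a =
      (fun j => if j % k = k - 1 then v (j / k) else u ((j / k) * (k - 1) + j % k)) b →
      a = b) := by
  have hk0 : 0 < k := by omega
  have ht0 : 0 < t := ht
  constructor
  · -- every window of length k is an edge
    intro a ha
    obtain ⟨q, r, hq, hr, rfl⟩ : ∃ q r, q < t ∧ r < k ∧ a = q * k + r :=
      ⟨a / k, a % k, (Nat.div_lt_iff_lt_mul hk0).mpr ha, Nat.mod_lt _ hk0,
        (Nat.div_add_mod' a k).symm⟩
    by_cases hrk : r = k - 1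
    · -- use condition (ii)
      set s' := (q + 1) % t with hs'def
      have hs' : s' < t := Nat.mod_lt _ ht0
      have hv' : (s' + t - 1) % t = q := by
        rcases Nat.lt_or_ge (q + 1) t with h | h
        · have : s' = q + 1 := Nat.mod_eq_of_lt h
          rw [this, show q + 1 + t - 1 = q + t by omega, Nat.add_mod_right,
            Nat.mod_eq_of_lt hq]
        · have hq1 : q + 1 = t := by omega
          have : s' = 0 := by rw [hs'def, hq1, Nat.mod_self]
          rw [this, Nat.zero_add, Nat.mod_eq_of_lt (by omega)]
          omega
      have hcw : cwin u (t * (k - 1)) (s' * (k - 1)) (k - 1) =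
          cwin u (t * (k - 1)) ((q + 1) * (k - 1)) (k - 1) := by
        apply cwin_congr
        rcases Nat.lt_or_ge (q + 1) t with h | h
        · rw [hs'def, Nat.mod_eq_of_lt h]
        · have hq1 : q + 1 = t := by omega
          rw [hs'def, hq1, Nat.mod_self, Nat.zero_mul, Nat.zero_mod, Nat.mod_self]
      have hE := hcondii s' hs'
      rw [hv', hcw] at hE
      suffices heq : cwin
          (fun j => if j % k = k - 1 then v (j / k) else u ((j / k) * (k - 1) + j % k))
          (t * k) (q * k + r) k =
          insert (v q) (cwin u (t * (k - 1)) ((q + 1) * (k - 1)) (k - 1)) by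
        rw [heq]; exact hE
      ext x
      simp only [mem_cwin, Finset.mem_insert]
      have e2 : (q + 1) * (k - 1) = q * (k - 1) + (k - 1) := Nat.succ_mul q (k - 1)
      constructor
      · rintro ⟨s, hs, hx⟩
        rw [wval k t u v hk ht q r s hq hr hs] at hx
        split_ifs at hx with h1 h2
        · exact Or.inl hx.symm
        · omega
        · right
          refine ⟨s - 1, by omega, ?_⟩
          have e : (q + 1) * (k - 1) + (s - 1) = q * (k - 1) + (r + s) - 1 := by omega
          rw [e]; exact hx
      · rintro (hx | ⟨i, hi, hx⟩)
        · refine ⟨0, by omega, ?_⟩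
          rw [wval k t u v hk ht q r 0 hq hr (by omega), if_pos (by omega), hx]
        · refine ⟨i + 1, by omega, ?_⟩
          rw [wval k t u v hk ht q r (i + 1) hq hr (by omega), if_neg (by omega),
            if_neg (by omega)]
          have e : q * (k - 1) + (r + (i + 1)) - 1 = (q + 1) * (k - 1) + i := by omega
          rw [e]; exact hx
    · -- r < k - 1 : use condition (i)
      have hrk' : r < k - 1 := by omega
      have hE := hcondi q hq r hrk'
      suffices heq : cwin
          (fun j => if j % k = k - 1 then v (j / k) else u ((j / k) * (k - 1) + j % k))
          (t * k) (q * k + r) k =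
          insert (v q) (cwin u (t * (k - 1)) (q * (k - 1) + r) (k - 1)) by
        rw [heq]; exact hE
      ext x
      simp only [mem_cwin, Finset.mem_insert]
      constructor
      · rintro ⟨s, hs, hx⟩
        rw [wval k t u v hk ht q r s hq hr hs] at hx
        split_ifs at hx with h1 h2
        · exact Or.inl hx.symm
        · right
          refine ⟨s, by omega, ?_⟩
          rw [Nat.add_assoc]; exact hx
        · right
          refine ⟨s - 1, by omega, ?_⟩
          have e : q * (k - 1) + r + (s - 1) = q * (k - 1) + (r + s) - 1 := by omega
          rw [e]; exact hx
      · rintro (hx | ⟨i, hi, hx⟩)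
        · refine ⟨k - 1 - r, by omega, ?_⟩
          rw [wval k t u v hk ht q r (k - 1 - r) hq hr (by omega), if_pos (by omega), hx]
        · by_cases hri : r + i < k - 1
          · refine ⟨i, by omega, ?_⟩
            rw [wval k t u v hk ht q r i hq hr (by omega), if_neg (by omega), if_pos hri,
              ← Nat.add_assoc]
            exact hx
          · refine ⟨i + 1, by omega, ?_⟩
            rw [wval k t u v hk ht q r (i + 1) hq hr (by omega), if_neg (by omega),
              if_neg (by omega)]
            have e : q * (k - 1) + (r + (i + 1)) - 1 = q * (k - 1) + r + i := by omega
            rw [e]; exact hx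
  · -- injectivity
    intro a ha b hb hab
    obtain ⟨q, r, hq, hr, rfl⟩ : ∃ q r, q < t ∧ r < k ∧ a = q * k + r :=
      ⟨a / k, a % k, (Nat.div_lt_iff_lt_mul hk0).mpr ha, Nat.mod_lt _ hk0,
        (Nat.div_add_mod' a k).symm⟩
    obtain ⟨p, s, hp, hs, rfl⟩ : ∃ p s, p < t ∧ s < k ∧ b = p * k + s :=
      ⟨b / k, b % k, (Nat.div_lt_iff_lt_mul hk0).mpr hb, Nat.mod_lt _ hk0,
        (Nat.div_add_mod' b k).symm⟩
    simp only [dm_mod k q r hr, dm_div k q r hk0 hr, dm_mod k p s hs,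
      dm_div k p s hk0 hs] at hab
    by_cases h1 : r = k - 1 <;> by_cases h2 : s = k - 1
    · rw [if_pos h1, if_pos h2] at hab
      obtain rfl : q = p := hvinj q hq p hp hab
      omega
    · rw [if_pos h1, if_neg h2] at hab
      have hlt : p * (k - 1) + s < t * (k - 1) := ltbig hp (by omega)
      exact absurd hab.symm (huv _ hlt q hq)
    · rw [if_neg h1, if_pos h2] at hab
      have hlt : q * (k - 1) + r < t * (k - 1) := ltbig hq (by omega)
      exact absurd hab (huv _ hlt p hp)
    · rw [if_neg h1, if_neg h2] at hab
      have hlta : q * (k - 1) + r < t * (k - 1) := ltbig hq (by omega)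
      have hltb : p * (k - 1) + s < t * (k - 1) := ltbig hp (by omega)
      have hidx := huinj _ hlta _ hltb hab
      obtain ⟨hqp, hrs⟩ := dmuniq (k - 1) q p r s (by omega) (by omega) (by omega) hidx
      subst hqp
      omega
end
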